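/- arXiv:1401.3367 — 2 statements merged into one kernel-verified Lean document; each statement's English description precedes it below -/
import Mathlib

section
/- Let T be an f-invariant subspace of V such that V = T ⊕ V_2 for some f-invariant subspace V_2, the restriction f|_T has only unrepeated elementary divisors (d(f|_T, t) ≤ 1 for all t ≥ 1), and f|_T and f|_{V_2} have no elementary divisor in common (there is no t ≥ 1 with d(f|_T, t) ≥ 1 and d(f|_{V_2}, t) ≥ 1). Let π_T : V → V be the projection onto T along V_2. Then for every subset Y ⊆ T one has Y^c ∩ T = π_T(Y^c) = Y^{c_T}, where Y^c is the characteristic hull of Y in V with respect to f and Y^{c_T} is the characteristic hull of Y in T with respect to f|_T. -/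
open Module LinearMap

section Defs

variable {K V : Type*} [Field K] [AddCommGroup V] [Module K V]

/-- `α` commutes with `f`. -/
def Commutes (f : V →ₗ[K] V) (α : V ≃ₗ[K] V) : Prop :=
  ∀ v, α (f v) = f (α v)

/-- `X` is hyperinvariant: invariant under every endomorphism commuting with `f`. -/
def Hyperinv (f : V →ₗ[K] V) (X : Submodule K V) : Prop :=
  ∀ g : V →ₗ[K] V, (∀ v, g (f v) = f (g v)) → ∀ x ∈ X, g x ∈ X

/-- `X` is characteristic: `f`-invariant and invariant under every automorphism
commuting with `f`. -/
def Charinv (f : V →ₗ[K] V) (X : Submodule K V) : Prop :=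
  (∀ x ∈ X, f x ∈ X) ∧ ∀ α : V ≃ₗ[K] V, Commutes f α → ∀ x ∈ X, α x ∈ X

/-- The characteristic hull of a set `B`: the subspace spanned by all
`f^i (α b)`, `b ∈ B`, `α` an automorphism commuting with `f`. -/
def charHull (f : V →ₗ[K] V) (B : Set V) : Submodule K V :=
  Submodule.span K
    {y | ∃ b ∈ B, ∃ i : ℕ, ∃ α : V ≃ₗ[K] V, Commutes f α ∧ y = (f ^ i) (α b)}

/-- The `f`-cyclic subspace generated by `x`. -/
def cyc (f : V →ₗ[K] V) (x : V) : Submodule K V :=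
  Submodule.span K (Set.range fun i : ℕ => (f ^ i) x)

/-- The `f`-invariant span of a set `B`. -/
def invSpan (f : V →ₗ[K] V) (B : Set V) : Submodule K V :=
  Submodule.span K {y | ∃ b ∈ B, ∃ i : ℕ, y = (f ^ i) b}

/-- The exponent of `x`: the least `ℓ` with `f^ℓ x = 0`. -/
noncomputable def expnt (f : V →ₗ[K] V) (x : V) : ℕ :=
  sInf {ℓ : ℕ | (f ^ ℓ) x = 0}

/-- The height of `x`: the largest `q` with `x ∈ f^q V`. -/
noncomputable def hgt (f : V →ₗ[K] V) (x : V) : ℕ :=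
  sSup {q : ℕ | x ∈ LinearMap.range (f ^ q)}

/-- `u` is a generator of `V`: `V = ⟨u⟩ ⊕ V₂` for some `f`-invariant `V₂`. -/
def IsGenerator (f : V →ₗ[K] V) (u : V) : Prop :=
  u ≠ 0 ∧ ∃ V₂ : Submodule K V, (∀ x ∈ V₂, f x ∈ V₂) ∧ IsCompl (cyc f u) V₂

/-- `(u 0, …, u (m-1))` is a generator tuple of `V`:
`V = ⟨u 0⟩ ⊕ ⋯ ⊕ ⟨u (m-1)⟩` with nondecreasing exponents. -/
def IsGenTuple {m : ℕ} (f : V →ₗ[K] V) (u : Fin m → V) : Prop :=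
  DirectSum.IsInternal (fun i => cyc f (u i)) ∧ Monotone fun i => expnt f (u i)

/-- The Ulm invariant `d(f,r) = dim ((ker f ⊓ f^{r-1} V) / (ker f ⊓ f^r V))`. -/
noncomputable def ulm (f : V →ₗ[K] V) (r : ℕ) : ℕ :=
  Module.finrank K
    (↥(LinearMap.ker f ⊓ LinearMap.range (f ^ (r - 1))) ⧸
      Submodule.comap (LinearMap.ker f ⊓ LinearMap.range (f ^ (r - 1))).subtype
        (LinearMap.ker f ⊓ LinearMap.range (f ^ r)))

/-- The largest hyperinvariant subspace contained in `X`
(the sum of all hyperinvariant subspaces contained in `X`). -/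
noncomputable def largestHyperinv (f : V →ₗ[K] V) (X : Submodule K V) : Submodule K V :=
  sSup {W : Submodule K V | Hyperinv f W ∧ W ≤ X}

end Defs

/-!
The chain `Y^c ⊓ T ≤ π_T (Y^c) ≤ Y^{c_T} ≤ Y^c ⊓ T` closes up. The last inclusion holds because
an automorphism of `T` commuting with `f|_T` extends by the identity on `V₂`. For the middle one,
`π_T (f^i (α b)) = (f|_T)^i (β b)` for the compression `β = π_T ∘ α|_T`, which commutes with
`f|_T`, so it suffices that `β` is injective. If `β` killed some `t ≠ 0`, nilpotency lets us take
`f t = 0`; with `h` the height of `t`, the vector `α t` lies in `V₂ ⊓ ker f` and also has height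
exactly `h` (heights in a direct summand are heights in `V`, and `α` preserves them). Then
`λ^(h+1)` would be an elementary divisor of both `f|_T` and `f|_{V₂}`.
-/

section

variable {K V : Type*} [Field K] [AddCommGroup V] [Module K V]

section Nilpotent

variable {g : Module.End K V}

theorem exists_mem_range_pow_and_notMem_range_pow_succ (hg : IsNilpotent g) {x : V}
    (hx : x ≠ 0) : ∃ h, x ∈ range (g ^ h) ∧ x ∉ range (g ^ (h + 1)) := by
  obtain ⟨n, hn⟩ := hg
  obtain ⟨h, hh, hh'⟩ := Nat.exists_not_and_succ_of_not_zero_of_exists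
    (p := fun k => x ∉ range (g ^ k)) (by simp) ⟨n, by simpa [hn] using hx⟩
  exact ⟨h, not_not.1 hh, hh'⟩

theorem injective_of_isNilpotent_of_commute (hg : IsNilpotent g) {β : Module.End K V}
    (hβ : Commute β g) (h : ∀ t, g t = 0 → β t = 0 → t = 0) : Function.Injective β := by
  obtain ⟨n, hn⟩ := hg
  refine (injective_iff_map_eq_zero β).2 fun t₀ ht₀ => by_contra fun hne => ?_
  obtain ⟨k, hk, hk'⟩ := Nat.exists_not_and_succ_of_not_zero_of_exists
    (p := fun k => (g ^ k) t₀ = 0) (by simpa using hne) ⟨n, by simp [hn]⟩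
  refine hk (h _ ?_ ?_)
  · rwa [← Module.End.mul_apply, ← pow_succ']
  · rw [← Module.End.mul_apply, (hβ.pow_right k).eq, Module.End.mul_apply, ht₀, map_zero]

theorem ulm_succ_pos [FiniteDimensional K V] {x : V} {r : ℕ} (hx : x ∈ ker g)
    (hxr : x ∈ range (g ^ r)) (hxr' : x ∉ range (g ^ (r + 1))) : 0 < ulm g (r + 1) := by
  set N := ker g ⊓ range (g ^ (r + 1 - 1))
  have hxN : x ∈ N := ⟨hx, by simpa using hxr⟩
  have : Nontrivial (N ⧸ (ker g ⊓ range (g ^ (r + 1))).comap N.subtype) :=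
    nontrivial_of_ne (Submodule.Quotient.mk ⟨x, hxN⟩) 0 fun h0 =>
      hxr' ((Submodule.Quotient.mk_eq_zero _).1 h0).2
  exact Module.finrank_pos

end Nilpotent

section Commutes

variable {f : Module.End K V} {α : V ≃ₗ[K] V}

theorem Commutes.pow_apply (hα : Commutes f α) (n : ℕ) (v : V) :
    α ((f ^ n) v) = (f ^ n) (α v) :=
  (LinearMap.congr_fun (Module.End.commute_pow_left_of_commute
    (f := (α : V →ₗ[K] V)) (LinearMap.ext fun v => (hα v).symm) n) v).symm

theorem Commutes.symm (hα : Commutes f α) : Commutes f α.symm := fun v =>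
  α.injective <| by rw [hα, α.apply_symm_apply, α.apply_symm_apply]

theorem Commutes.mem_range_pow (hα : Commutes f α) {n : ℕ} {v : V} (hv : v ∈ range (f ^ n)) :
    α v ∈ range (f ^ n) := by
  obtain ⟨w, rfl⟩ := hv
  exact ⟨α w, (hα.pow_apply n w).symm⟩

end Commutes

section Complement

variable {f : Module.End K V} {T V₂ : Submodule K V}

theorem coe_restrict_pow_apply (hT : ∀ x ∈ T, f x ∈ T) (n : ℕ) (x : T) :
    ((f.restrict hT ^ n) x : V) = (f ^ n) x := by
  rw [Module.End.pow_restrict, coe_restrict_apply]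

theorem commute_projection (hT : ∀ x ∈ T, f x ∈ T) (hV₂ : ∀ x ∈ V₂, f x ∈ V₂)
    (hcompl : IsCompl T V₂) : Commute (T.projection V₂ hcompl) f :=
  (T.isIdempotentElem_projection hcompl).commute_iff.2 <| by
    simpa [Module.End.mem_invtSubmodule_iff_forall_mem_of_mem] using ⟨hT, hV₂⟩

theorem projectionOnto_pow_apply (hT : ∀ x ∈ T, f x ∈ T) (hV₂ : ∀ x ∈ V₂, f x ∈ V₂)
    (hcompl : IsCompl T V₂) (n : ℕ) (v : V) :
    T.projectionOnto V₂ hcompl ((f ^ n) v) =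
      (f.restrict hT ^ n) (T.projectionOnto V₂ hcompl v) := by
  ext
  rw [coe_restrict_pow_apply, ← Submodule.projection_apply, ← Submodule.projection_apply,
    ← Module.End.mul_apply, ((commute_projection hT hV₂ hcompl).pow_right n).eq,
    Module.End.mul_apply]

theorem mem_range_restrict_pow_iff (hT : ∀ x ∈ T, f x ∈ T) (hV₂ : ∀ x ∈ V₂, f x ∈ V₂)
    (hcompl : IsCompl T V₂) {n : ℕ} {x : T} :
    x ∈ range (f.restrict hT ^ n) ↔ (x : V) ∈ range (f ^ n) := by
  refine ⟨fun ⟨y, hy⟩ => ⟨y, by rw [← hy, coe_restrict_pow_apply]⟩, fun ⟨y, hy⟩ => ?_⟩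
  refine ⟨T.projectionOnto V₂ hcompl y, ?_⟩
  rw [← projectionOnto_pow_apply hT hV₂ hcompl, hy, Submodule.projectionOnto_apply_left]

noncomputable def extendAut (hcompl : IsCompl T V₂) (α : T ≃ₗ[K] T) : V ≃ₗ[K] V :=
  (Submodule.prodEquivOfIsCompl T V₂ hcompl).symm ≪≫ₗ α.prodCongr (LinearEquiv.refl K V₂) ≪≫ₗ
    Submodule.prodEquivOfIsCompl T V₂ hcompl

@[simp]
theorem extendAut_apply_left (hcompl : IsCompl T V₂) (α : T ≃ₗ[K] T) (t : T) :
    extendAut hcompl α t = α t := by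
  simp [extendAut]

@[simp]
theorem extendAut_apply_right (hcompl : IsCompl T V₂) (α : T ≃ₗ[K] T) (w : V₂) :
    extendAut hcompl α w = w := by
  simp [extendAut]

theorem commutes_extendAut (hT : ∀ x ∈ T, f x ∈ T) (hV₂ : ∀ x ∈ V₂, f x ∈ V₂)
    (hcompl : IsCompl T V₂) {α : T ≃ₗ[K] T} (hα : Commutes (f.restrict hT) α) :
    Commutes f (extendAut hcompl α) := by
  suffices (extendAut hcompl α : Module.End K V) ∘ₗ f = f ∘ₗ extendAut hcompl α from
    LinearMap.congr_fun this
  refine LinearMap.ext_on_codisjoint hcompl.codisjoint (fun t ht => ?_) (fun w hw => ?_)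
  · change extendAut hcompl α (f.restrict hT ⟨t, ht⟩ : T) = f (extendAut hcompl α (⟨t, ht⟩ : T))
    rw [extendAut_apply_left, extendAut_apply_left, hα]
    rfl
  · change extendAut hcompl α (⟨f w, hV₂ w hw⟩ : V₂) = f (extendAut hcompl α (⟨w, hw⟩ : V₂))
    rw [extendAut_apply_right, extendAut_apply_right]

noncomputable def compress (hcompl : IsCompl T V₂) (α : V ≃ₗ[K] V) : Module.End K T :=
  T.projectionOnto V₂ hcompl ∘ₗ (α : Module.End K V) ∘ₗ T.subtype

theorem commute_compress (hT : ∀ x ∈ T, f x ∈ T) (hV₂ : ∀ x ∈ V₂, f x ∈ V₂)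
    (hcompl : IsCompl T V₂) {α : V ≃ₗ[K] V} (hα : Commutes f α) :
    Commute (compress hcompl α) (f.restrict hT) := by
  ext t
  change T.projection V₂ hcompl (α (f t)) = f (T.projection V₂ hcompl (α t))
  rw [hα]
  exact LinearMap.congr_fun (commute_projection hT hV₂ hcompl).eq (α t)

theorem injective_compress [FiniteDimensional K V] (hf : IsNilpotent f)
    (hT : ∀ x ∈ T, f x ∈ T) (hV₂ : ∀ x ∈ V₂, f x ∈ V₂) (hcompl : IsCompl T V₂)
    (hdisj : ¬ ∃ t, 1 ≤ t ∧ 1 ≤ ulm (f.restrict hT) t ∧ 1 ≤ ulm (f.restrict hV₂) t)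
    {α : V ≃ₗ[K] V} (hα : Commutes f α) : Function.Injective (compress hcompl α) := by
  have hg := Module.End.isNilpotent.restrict hT hf
  refine injective_of_isNilpotent_of_commute hg (commute_compress hT hV₂ hcompl hα) ?_
  intro t ht hβt
  by_contra ht0
  obtain ⟨h, hth, hth'⟩ := exists_mem_range_pow_and_notMem_range_pow_succ hg ht0
  have hαt : α t ∈ V₂ := (Submodule.projectionOnto_apply_eq_zero_iff hcompl).1 hβt
  set s : V₂ := ⟨α t, hαt⟩
  have hs : s ∈ ker (f.restrict hV₂) := by
    ext
    change f (α t) = 0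
    rw [← hα, show f t = (f.restrict hT t : V) from rfl, ht, Submodule.coe_zero, map_zero]
  have hsh : s ∈ range (f.restrict hV₂ ^ h) :=
    (mem_range_restrict_pow_iff hV₂ hT hcompl.symm).2 <|
      hα.mem_range_pow <| (mem_range_restrict_pow_iff hT hV₂ hcompl).1 hth
  have hsh' : s ∉ range (f.restrict hV₂ ^ (h + 1)) := fun hs' =>
    hth' <| (mem_range_restrict_pow_iff hT hV₂ hcompl).2 <| by
      simpa [s] using hα.symm.mem_range_pow ((mem_range_restrict_pow_iff hV₂ hT hcompl.symm).1 hs')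
  exact hdisj ⟨h + 1, le_add_self, ulm_succ_pos ht hth hth', ulm_succ_pos hs hsh hsh'⟩

end Complement

section CharHull

variable {f : Module.End K V}

theorem pow_apply_mem_charHull {B : Set V} {b : V} (hb : b ∈ B) {α : V ≃ₗ[K] V}
    (hα : Commutes f α) (n : ℕ) : (f ^ n) (α b) ∈ charHull f B :=
  Submodule.subset_span ⟨b, hb, n, α, hα, rfl⟩

theorem map_charHull_le_iff {W : Type*} [AddCommGroup W] [Module K W] {φ : V →ₗ[K] W}
    {B : Set V} {S : Submodule K W} : (charHull f B).map φ ≤ S ↔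
      ∀ b ∈ B, ∀ n (α : V ≃ₗ[K] V), Commutes f α → φ ((f ^ n) (α b)) ∈ S := by
  rw [Submodule.map_le_iff_le_comap, charHull, Submodule.span_le]
  exact ⟨fun h b hb n α hα => h ⟨b, hb, n, α, hα, rfl⟩,
    by rintro h _ ⟨b, hb, n, α, hα, rfl⟩; exact h b hb n α hα⟩

variable {T V₂ : Submodule K V}

theorem map_subtype_charHull_restrict_le (hT : ∀ x ∈ T, f x ∈ T) (hV₂ : ∀ x ∈ V₂, f x ∈ V₂)
    (hcompl : IsCompl T V₂) (Y : Set V) :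
    (charHull (f.restrict hT) (Subtype.val ⁻¹' Y)).map T.subtype ≤ charHull f Y :=
  map_charHull_le_iff.2 fun b hb n α hα => by
    rw [Submodule.subtype_apply, coe_restrict_pow_apply, ← extendAut_apply_left hcompl]
    exact pow_apply_mem_charHull (show (b : V) ∈ Y from hb) (commutes_extendAut hT hV₂ hcompl hα) n

theorem map_projectionOnto_charHull_le [FiniteDimensional K V] (hf : IsNilpotent f)
    (hT : ∀ x ∈ T, f x ∈ T) (hV₂ : ∀ x ∈ V₂, f x ∈ V₂) (hcompl : IsCompl T V₂)
    (hdisj : ¬ ∃ t, 1 ≤ t ∧ 1 ≤ ulm (f.restrict hT) t ∧ 1 ≤ ulm (f.restrict hV₂) t)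
    {Y : Set V} (hY : Y ⊆ T) :
    (charHull f Y).map (T.projectionOnto V₂ hcompl) ≤
      charHull (f.restrict hT) (Subtype.val ⁻¹' Y) :=
  map_charHull_le_iff.2 fun b hb n α hα => by
    set β := LinearEquiv.ofInjectiveEndo _ (injective_compress hf hT hV₂ hcompl hdisj hα)
    have hβ : Commutes (f.restrict hT) β := fun t =>
      LinearMap.congr_fun (commute_compress hT hV₂ hcompl hα).eq t
    rw [projectionOnto_pow_apply hT hV₂ hcompl]
    exact pow_apply_mem_charHull (show (⟨b, hY hb⟩ : T) ∈ Subtype.val ⁻¹' Y from hb) hβ n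

end CharHull

end

theorem stmt15_general {K V : Type*} [Field K] [AddCommGroup V] [Module K V]
    [FiniteDimensional K V] (f : V →ₗ[K] V) (hf : IsNilpotent f)
    (T V₂ : Submodule K V) (hT : ∀ x ∈ T, f x ∈ T) (hV₂ : ∀ x ∈ V₂, f x ∈ V₂)
    (hcompl : IsCompl T V₂)
    (hdisj : ¬ ∃ t, 1 ≤ t ∧ 1 ≤ ulm (f.restrict hT) t ∧ 1 ≤ ulm (f.restrict hV₂) t)
    (Y : Set V) (hY : Y ⊆ (T : Set V)) :
    charHull f Y ⊓ T =
        Submodule.map (T.subtype ∘ₗ T.linearProjOfIsCompl V₂ hcompl) (charHull f Y) ∧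
      charHull f Y ⊓ T =
        Submodule.map T.subtype
          (charHull (f.restrict hT) ((Subtype.val ⁻¹' Y : Set T))) := by
  have hinT : charHull f Y ⊓ T ≤ (charHull f Y).map (T.subtype ∘ₗ T.projectionOnto V₂ hcompl) :=
    fun x ⟨hx, hxT⟩ => ⟨x, hx, by simp [Submodule.projectionOnto_apply_of_mem_left hcompl hxT]⟩
  have hproj : (charHull f Y).map (T.subtype ∘ₗ T.projectionOnto V₂ hcompl) ≤
      (charHull (f.restrict hT) (Subtype.val ⁻¹' Y)).map T.subtype := by
    rw [Submodule.map_comp]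
    exact Submodule.map_mono (map_projectionOnto_charHull_le hf hT hV₂ hcompl hdisj hY)
  have hsub : (charHull (f.restrict hT) (Subtype.val ⁻¹' Y)).map T.subtype ≤ charHull f Y ⊓ T :=
    le_inf (map_subtype_charHull_restrict_le hT hV₂ hcompl Y) (Submodule.map_subtype_le _ _)
  exact ⟨le_antisymm hinT (hproj.trans hsub), le_antisymm (hinT.trans hproj) hsub⟩

theorem stmt15 {K V : Type*} [Field K] [AddCommGroup V] [Module K V]
    [FiniteDimensional K V] (f : V →ₗ[K] V) (hf : IsNilpotent f)
    (T V₂ : Submodule K V) (hT : ∀ x ∈ T, f x ∈ T) (hV₂ : ∀ x ∈ V₂, f x ∈ V₂)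
    (hcompl : IsCompl T V₂)
    (hTun : ∀ t, 1 ≤ t → ulm (f.restrict hT) t ≤ 1)
    (hdisj : ¬ ∃ t, 1 ≤ t ∧ 1 ≤ ulm (f.restrict hT) t ∧ 1 ≤ ulm (f.restrict hV₂) t)
    (Y : Set V) (hY : Y ⊆ (T : Set V)) :
    charHull f Y ⊓ T =
        Submodule.map (T.subtype ∘ₗ T.linearProjOfIsCompl V₂ hcompl) (charHull f Y) ∧
      charHull f Y ⊓ T =
        Submodule.map T.subtype
          (charHull (f.restrict hT) ((Subtype.val ⁻¹' Y : Set T))) :=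
  stmt15_general f hf T V₂ hT hV₂ hcompl hdisj Y hY
end

section
/- Let (u_1, …, u_m) be a generator tuple of V with e(u_i) = t_i, and suppose f has no unrepeated elementary divisors, i.e. d(f, t_i) > 1 for all i = 1, …, m. Then a subspace X ⊆ V is hyperinvariant if and only if X = ⟨f^{r_1}(u_1) + ⋯ + f^{r_m}(u_m)⟩^c for some integers r_1, …, r_m satisfying 0 ≤ r_1 ≤ ⋯ ≤ r_m and 0 ≤ t_1 − r_1 ≤ ⋯ ≤ t_m − r_m. -/
open Module LinearMap

/-!
Write `tᵢ = e(uᵢ)`. Any assignment `uᵢ ↦ wᵢ` with `f^{tᵢ} wᵢ = 0` extends to an endomorphism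
commuting with `f`; in particular so do the projections `πᵢ` onto the cyclic summands. Inside a
cyclic subspace `⟨x⟩` the `f`-invariant subspaces form the chain `⟨f^k x⟩`, because a dimension
count gives `ker f^e ∩ ⟨x⟩ = ⟨f^{e(x)-e} x⟩`.

Hence a hyperinvariant `X` is the sum of its components `πᵢ X = ⟨f^{rᵢ} uᵢ⟩`, and the maps
`uⱼ ↦ uᵢ` and `uᵢ ↦ f^{tⱼ-tᵢ} uⱼ` (for `i ≤ j`) force the two monotonicity conditions on `r`.
Conversely these conditions make `⊕ ⟨f^{rᵢ} uᵢ⟩` hyperinvariant. It is the characteristic hull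
of `w₀ = ∑ f^{rᵢ} uᵢ`: modulo `ker f ∩ f^t V`, the space `ker f ∩ f^{t-1} V` is spanned by the
vectors `f^{t-1} uⱼ` with `tⱼ = t`, so `d(f, tᵢ) > 1` yields `j ≠ i` with `tⱼ = tᵢ`, and the
automorphism `uⱼ ↦ uⱼ + uᵢ` moves `w₀` by exactly `f^{rᵢ} uᵢ`.
-/

section

variable {K V : Type*} [Field K] [AddCommGroup V] [Module K V] {f : V →ₗ[K] V}

theorem finrank_map_add_finrank_inf_ker {W : Type*} [AddCommGroup W] [Module K W]
    (g : V →ₗ[K] W) (p : Submodule K V) [FiniteDimensional K p] :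
    finrank K (p.map g) + finrank K ↥(p ⊓ ker g) = finrank K p := by
  rw [← range_domRestrict, ← Submodule.map_comap_subtype, ← ker_domRestrict,
    Submodule.finrank_map_subtype_eq]
  exact finrank_range_add_finrank_ker _

theorem finrank_quotient_le_one [FiniteDimensional K V] {A B : Submodule K V} {v : V}
    (hBA : B ≤ A) (hA : A ≤ B ⊔ K ∙ v) : finrank K (A ⧸ B.comap A.subtype) ≤ 1 := by
  have hquot := Submodule.finrank_quotient_add_finrank (B.comap A.subtype)
  have hcomap := (Submodule.comapSubtypeEquivOfLe hBA).finrank_eq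
  have hsup := Submodule.finrank_add_le_finrank_add_finrank B (K ∙ v)
  have hline : finrank K (K ∙ v) ≤ 1 := by simpa using finrank_span_le_card ({v} : Set V)
  have := Submodule.finrank_mono hA
  omega

theorem single_apply_mem {m : ℕ} {W : Submodule K V} {x : V} (hx : x ∈ W) (j l : Fin m) :
    (Pi.single j x : Fin m → V) l ∈ W := by
  rcases eq_or_ne l j with rfl | h
  · simpa using hx
  · simp [h]

section Iterates

theorem pow_apply_pow (a b : ℕ) (x : V) : (f ^ a) ((f ^ b) x) = (f ^ (a + b)) x := by
  rw [pow_add, Module.End.mul_apply]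

theorem apply_pow_apply (k : ℕ) (x : V) : f ((f ^ k) x) = (f ^ (k + 1)) x := by
  rw [pow_succ', Module.End.mul_apply]

theorem pow_apply_comm {g : V →ₗ[K] V} (hg : ∀ v, g (f v) = f (g v)) (k : ℕ) (v : V) :
    g ((f ^ k) v) = (f ^ k) (g v) :=
  LinearMap.congr_fun ((show Commute g f from LinearMap.ext hg).pow_right k) v

theorem range_pow_antitone : Antitone fun k : ℕ => range (f ^ k) := fun k l h => by
  simp only
  rw [← Nat.add_sub_cancel' h, pow_add, Module.End.mul_eq_comp]
  exact range_comp_le_range _ _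

theorem pow_expnt_apply (hf : IsNilpotent f) (x : V) : (f ^ expnt f x) x = 0 := by
  obtain ⟨n, hn⟩ := hf
  exact Nat.sInf_mem (s := {ℓ | (f ^ ℓ) x = 0}) ⟨n, by simp [hn]⟩

theorem expnt_le_iff (hf : IsNilpotent f) {x : V} {k : ℕ} : expnt f x ≤ k ↔ (f ^ k) x = 0 := by
  refine ⟨fun h => ?_, fun h => Nat.sInf_le h⟩
  rw [← Nat.sub_add_cancel h, ← pow_apply_pow, pow_expnt_apply hf, map_zero]

theorem expnt_pow_apply (hf : IsNilpotent f) (k : ℕ) (x : V) :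
    expnt f ((f ^ k) x) = expnt f x - k := by
  refine le_antisymm ((expnt_le_iff hf).2 ?_) (Nat.sub_le_of_le_add ((expnt_le_iff hf).2 ?_))
  · rw [pow_apply_pow]
    exact (expnt_le_iff hf).1 (by omega)
  · rw [← pow_apply_pow, pow_expnt_apply hf]

end Iterates

section Cyclic

theorem pow_apply_mem_cyc (k : ℕ) (x : V) : (f ^ k) x ∈ cyc f x :=
  Submodule.subset_span ⟨k, rfl⟩

theorem self_mem_cyc (x : V) : x ∈ cyc f x := by
  simpa using pow_apply_mem_cyc (f := f) 0 x

theorem cyc_le {W : Submodule K V} (hW : ∀ y ∈ W, f y ∈ W) {x : V} (hx : x ∈ W) :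
    cyc f x ≤ W := by
  have hpow : ∀ k, (f ^ k) x ∈ W := fun k => by
    induction k with
    | zero => simpa using hx
    | succ k ih => rw [← apply_pow_apply]; exact hW _ ih
  exact Submodule.span_le.2 (Set.range_subset_iff.2 hpow)

theorem map_pow_cyc (k : ℕ) (x : V) : (cyc f x).map (f ^ k) = cyc f ((f ^ k) x) := by
  rw [cyc, cyc, Submodule.map_span, ← Set.range_comp]
  congr 1
  ext y
  simp [pow_apply_pow, add_comm]

theorem map_cyc (x : V) : (cyc f x).map f = cyc f (f x) := by
  simpa using map_pow_cyc (f := f) 1 x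

theorem pow_apply_mem_cyc_pow {k : ℕ} {x y : V} (hy : y ∈ cyc f x) :
    (f ^ k) y ∈ cyc f ((f ^ k) x) := by
  rw [← map_pow_cyc]
  exact Submodule.mem_map_of_mem hy

theorem cyc_pow_apply_le (k : ℕ) (x : V) : cyc f ((f ^ k) x) ≤ cyc f x :=
  Submodule.span_le.2 <| Set.range_subset_iff.2 fun n => by
    rw [pow_apply_pow]
    exact pow_apply_mem_cyc _ x

theorem cyc_pow_le_cyc_pow {a b : ℕ} (h : a ≤ b) (x : V) :
    cyc f ((f ^ b) x) ≤ cyc f ((f ^ a) x) := by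
  rw [← Nat.sub_add_cancel h, ← pow_apply_pow]
  exact cyc_pow_apply_le _ _

theorem apply_mem_cyc {x y : V} (hy : y ∈ cyc f x) : f y ∈ cyc f x := by
  simpa using cyc_pow_apply_le 1 x (pow_apply_mem_cyc_pow (k := 1) hy)

theorem cyc_le_range_pow (k : ℕ) (x : V) : cyc f ((f ^ k) x) ≤ range (f ^ k) := by
  rw [← map_pow_cyc]
  exact LinearMap.map_le_range

theorem cyc_eq_span_singleton {y : V} (hy : f y = 0) : cyc f y = K ∙ y := by
  refine le_antisymm (Submodule.span_le.2 <| Set.range_subset_iff.2 fun n => ?_)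
    (Submodule.span_le.2 <| Set.singleton_subset_iff.2 (self_mem_cyc y))
  cases n with
  | zero => simp [Submodule.mem_span_singleton_self]
  | succ n => simp [pow_succ, hy]

theorem linearIndependent_pow_apply (hf : IsNilpotent f) (x : V) :
    LinearIndependent K fun k : Fin (expnt f x) => (f ^ (k : ℕ)) x := by
  suffices h : ∀ n (x : V), expnt f x = n →
      LinearIndependent K fun k : Fin n => (f ^ (k : ℕ)) x from h _ x rfl
  intro n
  induction n with
  | zero => exact fun _ _ => linearIndependent_empty_type
  | succ n ih =>
    intro x hx
    rw [linearIndependent_finSucc]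
    constructor
    · convert ih ((f ^ 1) x) (by rw [expnt_pow_apply hf, hx, Nat.add_sub_cancel]) using 2 with k
      simp [Fin.tail, pow_succ]
    · have htail : Submodule.span K (Set.range (Fin.tail fun k : Fin (n + 1) => (f ^ (k : ℕ)) x))
          ≤ ker (f ^ n) :=
        Submodule.span_le.2 <| Set.range_subset_iff.2 fun k => by
          simp only [Fin.tail, Fin.val_succ, SetLike.mem_coe, mem_ker, pow_apply_pow]
          exact (expnt_le_iff hf).1 (by omega)
      intro hmem
      have hle : expnt f x ≤ n := (expnt_le_iff hf).2 (by simpa using htail hmem)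
      omega

theorem cyc_eq_span_pow_apply (hf : IsNilpotent f) (x : V) :
    cyc f x = Submodule.span K (Set.range fun k : Fin (expnt f x) => (f ^ (k : ℕ)) x) := by
  refine le_antisymm (Submodule.span_le.2 <| Set.range_subset_iff.2 fun n => ?_)
    (Submodule.span_mono <| Set.range_subset_iff.2 fun k => ⟨k, rfl⟩)
  by_cases hn : n < expnt f x
  · exact Submodule.subset_span ⟨⟨n, hn⟩, rfl⟩
  · rw [SetLike.mem_coe, (expnt_le_iff hf).1 (not_lt.1 hn)]
    exact zero_mem _

noncomputable def cycBasis (hf : IsNilpotent f) (x : V) : Basis (Fin (expnt f x)) K (cyc f x) :=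
  (Basis.span (linearIndependent_pow_apply hf x)).map
    (LinearEquiv.ofEq _ _ (cyc_eq_span_pow_apply hf x).symm)

theorem cycBasis_apply (hf : IsNilpotent f) (x : V) (k : Fin (expnt f x)) :
    (cycBasis hf x k : V) = (f ^ (k : ℕ)) x := by
  simp [cycBasis, Basis.span_apply]

theorem finrank_cyc (hf : IsNilpotent f) (x : V) : finrank K (cyc f x) = expnt f x := by
  simpa using Module.finrank_eq_card_basis (cycBasis hf x)

theorem ker_pow_inf_cyc (hf : IsNilpotent f) (e : ℕ) (x : V) :
    ker (f ^ e) ⊓ cyc f x = cyc f ((f ^ (expnt f x - e)) x) := by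
  have : FiniteDimensional K (cyc f x) := .of_basis (cycBasis hf x)
  have hker : ∀ y ∈ ker (f ^ e), f y ∈ ker (f ^ e) := fun y hy => by
    rw [mem_ker, ← pow_apply_comm (fun _ => rfl), mem_ker.1 hy, map_zero]
  have hle : cyc f ((f ^ (expnt f x - e)) x) ≤ ker (f ^ e) ⊓ cyc f x :=
    le_inf (cyc_le hker <| by rw [mem_ker, pow_apply_pow]; exact (expnt_le_iff hf).1 (by omega))
      (cyc_pow_apply_le _ x)
  refine (Submodule.eq_of_le_of_finrank_eq hle ?_).symm
  have hrank := finrank_map_add_finrank_inf_ker (f ^ e) (cyc f x)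
  rw [map_pow_cyc, finrank_cyc hf, finrank_cyc hf, expnt_pow_apply hf, inf_comm] at hrank
  rw [finrank_cyc hf, expnt_pow_apply hf]
  omega

theorem cyc_le_ker_pow_expnt (hf : IsNilpotent f) (x : V) : cyc f x ≤ ker (f ^ expnt f x) := by
  simpa using (ker_pow_inf_cyc hf (expnt f x) x).ge

theorem cyc_eq_cyc_pow_of_mem (hf : IsNilpotent f) {x y : V} (hy : y ∈ cyc f x) :
    cyc f y = cyc f ((f ^ (expnt f x - expnt f y)) x) := by
  have : FiniteDimensional K (cyc f ((f ^ (expnt f x - expnt f y)) x)) := .of_basis (cycBasis hf _)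
  have hyx : expnt f y ≤ expnt f x := (expnt_le_iff hf).2 (cyc_le_ker_pow_expnt hf x hy)
  have hmem : y ∈ cyc f ((f ^ (expnt f x - expnt f y)) x) := by
    rw [← ker_pow_inf_cyc hf]
    exact ⟨pow_expnt_apply hf y, hy⟩
  refine Submodule.eq_of_le_of_finrank_eq (cyc_le (fun _ => apply_mem_cyc) hmem) ?_
  rw [finrank_cyc hf, finrank_cyc hf, expnt_pow_apply hf]
  omega

end Cyclic

theorem pow_expnt_single_apply {m : ℕ} {u : Fin m → V} {j : Fin m} {v : V}
    (hv : (f ^ expnt f (u j)) v = 0) (i : Fin m) :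
    (f ^ expnt f (u i)) ((Pi.single j v : Fin m → V) i) = 0 := by
  rcases eq_or_ne i j with rfl | h
  · simpa using hv
  · simp [h]

namespace IsGenTuple

variable (hf : IsNilpotent f) {m : ℕ} {u : Fin m → V} (hU : IsGenTuple f u)

noncomputable def basis : Basis (Σ i, Fin (expnt f (u i))) K V :=
  hU.1.collectedBasis fun i => cycBasis hf (u i)

theorem basis_apply (p : Σ i, Fin (expnt f (u i))) :
    hU.basis hf p = (f ^ (p.2 : ℕ)) (u p.1) := by
  rw [basis, DirectSum.IsInternal.collectedBasis_coe]
  exact cycBasis_apply hf _ _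

noncomputable def lift (w : Fin m → V) : V →ₗ[K] V :=
  (hU.basis hf).constr K fun p => (f ^ (p.2 : ℕ)) (w p.1)

theorem lift_basis (w : Fin m → V) (p : Σ i, Fin (expnt f (u i))) :
    hU.lift hf w (hU.basis hf p) = (f ^ (p.2 : ℕ)) (w p.1) :=
  Basis.constr_basis _ _ _ _

noncomputable def proj (i : Fin m) : V →ₗ[K] V :=
  hU.lift hf (Pi.single i (u i))

variable {hf hU} {w : Fin m → V}

theorem lift_pow_apply (hw : ∀ i, (f ^ expnt f (u i)) (w i) = 0) (i : Fin m) (k : ℕ) :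
    hU.lift hf w ((f ^ k) (u i)) = (f ^ k) (w i) := by
  by_cases hk : k < expnt f (u i)
  · simpa [basis_apply] using hU.lift_basis hf w ⟨i, k, hk⟩
  · rw [not_lt] at hk
    rw [(expnt_le_iff hf).1 hk, map_zero, ← Nat.sub_add_cancel hk, ← pow_apply_pow, hw, map_zero]

theorem lift_apply_self (hw : ∀ i, (f ^ expnt f (u i)) (w i) = 0) (i : Fin m) :
    hU.lift hf w (u i) = w i := by
  simpa using lift_pow_apply hw i 0

theorem lift_comp_self (hw : ∀ i, (f ^ expnt f (u i)) (w i) = 0) :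
    hU.lift hf w ∘ₗ f = f ∘ₗ hU.lift hf w :=
  (hU.basis hf).ext fun p => by
    simp only [comp_apply, basis_apply]
    rw [apply_pow_apply, lift_pow_apply hw, lift_pow_apply hw, apply_pow_apply]

theorem lift_apply_comm (hw : ∀ i, (f ^ expnt f (u i)) (w i) = 0) (v : V) :
    hU.lift hf w (f v) = f (hU.lift hf w v) :=
  LinearMap.congr_fun (lift_comp_self (hf := hf) (hU := hU) hw) v

theorem lift_apply_mem {W : Submodule K V} (hW : ∀ y ∈ W, f y ∈ W) (hw : ∀ i, w i ∈ W)
    (v : V) : hU.lift hf w v ∈ W := by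
  refine (Basis.constr_range _ _).le.trans (Submodule.span_le.2 ?_) ⟨v, rfl⟩
  rintro - ⟨p, rfl⟩
  exact cyc_le hW (hw p.1) (pow_apply_mem_cyc _ _)

theorem lift_single_pow_apply {j : Fin m} {v : V} (hv : (f ^ expnt f (u j)) v = 0) (k : ℕ) :
    hU.lift hf (Pi.single j v) ((f ^ k) (u j)) = (f ^ k) v := by
  rw [lift_pow_apply (pow_expnt_single_apply hv), Pi.single_eq_same]

variable (hf hU)

theorem proj_apply_mem (i : Fin m) (v : V) : hU.proj hf i v ∈ cyc f (u i) :=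
  lift_apply_mem (fun _ => apply_mem_cyc) (single_apply_mem (self_mem_cyc _) i) v

theorem proj_apply_comm (i : Fin m) (v : V) : hU.proj hf i (f v) = f (hU.proj hf i v) :=
  lift_apply_comm (pow_expnt_single_apply (pow_expnt_apply hf _)) v

theorem sum_proj_apply (v : V) : ∑ i, hU.proj hf i v = v := by
  have : ∑ i, hU.proj hf i = LinearMap.id := (hU.basis hf).ext fun p => by
    rw [LinearMap.sum_apply]
    simp only [proj, lift_basis, ← map_sum]
    simp [basis_apply]
  simpa using LinearMap.congr_fun this v

theorem exists_commutes_apply_eq_add {i j : Fin m} (hij : i ≠ j)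
    (ht : expnt f (u i) ≤ expnt f (u j)) :
    ∃ α : V ≃ₗ[K] V, Commutes f α ∧ ∀ v, α v = v + hU.lift hf (Pi.single j (u i)) v := by
  set τ := hU.lift hf (Pi.single j (u i))
  have hw := pow_expnt_single_apply (u := u) ((expnt_le_iff hf).1 ht)
  have hτf : ∀ v, τ (f v) = f (τ v) := lift_apply_comm hw
  have hττ : ∀ v, τ (τ v) = 0 := fun v => by
    have hker : cyc f (u i) ≤ ker τ :=
      cyc_le (fun y hy => by rw [mem_ker, hτf, mem_ker.1 hy, map_zero])
        (by rw [mem_ker, lift_apply_self hw, Pi.single_eq_of_ne hij])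
    exact hker (lift_apply_mem (fun _ => apply_mem_cyc) (single_apply_mem (self_mem_cyc _) j) v)
  refine ⟨.ofLinearMap (LinearMap.id + τ) (LinearMap.id - τ) ?_ ?_, fun v => ?_, fun v => rfl⟩
  · ext v
    simp [hττ]
  · ext v
    simp [hττ]
  · simp [hτf]

end IsGenTuple

namespace IsGenTuple

variable {m : ℕ} {u : Fin m → V}

theorem ker_inf_range_pow_le (hf : IsNilpotent f) (hU : IsGenTuple f u) {i : Fin m}
    (hi : ∀ j, j ≠ i → expnt f (u j) ≠ expnt f (u i)) :
    ker f ⊓ range (f ^ (expnt f (u i) - 1)) ≤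
      (ker f ⊓ range (f ^ expnt f (u i))) ⊔ K ∙ (f ^ (expnt f (u i) - 1)) (u i) := by
  set t := expnt f (u i)
  rintro - ⟨ha, v, rfl⟩
  rw [← hU.sum_proj_apply hf ((f ^ (t - 1)) v)]
  refine Submodule.sum_mem _ fun j _ => ?_
  have hy : hU.proj hf j ((f ^ (t - 1)) v) ∈ cyc f ((f ^ (t - 1)) (u j)) := by
    rw [pow_apply_comm (hU.proj_apply_comm hf j)]
    exact pow_apply_mem_cyc_pow (hU.proj_apply_mem hf j v)
  set y := hU.proj hf j ((f ^ (t - 1)) v)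
  have hfy : f y = 0 := by rw [← proj_apply_comm, mem_ker.1 ha, map_zero]
  rcases lt_trichotomy (expnt f (u j)) t with hlt | heq | hgt
  · rw [(expnt_le_iff hf).1 (by omega), cyc_eq_span_singleton (map_zero f),
      Submodule.span_zero_singleton, Submodule.mem_bot] at hy
    rw [hy]
    exact zero_mem _
  · obtain rfl : j = i := by_contra fun h => hi j h heq
    refine Submodule.mem_sup_right ?_
    rwa [cyc_eq_span_singleton] at hy
    rw [apply_pow_apply]
    exact (expnt_le_iff hf).1 (by omega)
  · refine Submodule.mem_sup_left ⟨hfy, range_pow_antitone (by omega : t ≤ expnt f (u j) - 1) ?_⟩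
    refine cyc_le_range_pow _ (u j) ?_
    rw [← ker_pow_inf_cyc hf 1]
    exact Submodule.mem_inf.2 ⟨by rwa [mem_ker, pow_one], hU.proj_apply_mem hf j _⟩

theorem exists_ne_expnt_eq [FiniteDimensional K V] (hf : IsNilpotent f) (hU : IsGenTuple f u)
    {i : Fin m} (hi : 1 < ulm f (expnt f (u i))) : ∃ j, j ≠ i ∧ expnt f (u j) = expnt f (u i) := by
  by_contra! hne
  exact hi.not_ge <| finrank_quotient_le_one
    (inf_le_inf_left _ (range_pow_antitone (Nat.sub_le _ 1))) (hU.ker_inf_range_pow_le hf hne)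

end IsGenTuple

section Hyperinvariant

variable {X : Submodule K V}

theorem Hyperinv.apply_mem (hX : Hyperinv f X) {x : V} (hx : x ∈ X) : f x ∈ X :=
  hX f (fun _ => rfl) x hx

theorem Hyperinv.pow_apply_mem (hX : Hyperinv f X) (k : ℕ) {x : V} (hx : x ∈ X) :
    (f ^ k) x ∈ X :=
  hX _ (fun v => (pow_apply_comm (fun _ => rfl) k v).symm) x hx

theorem Hyperinv.pow_apply_mem_of_pow_apply_mem (hf : IsNilpotent f) {m : ℕ} {u : Fin m → V}
    (hU : IsGenTuple f u) (hX : Hyperinv f X) {j : Fin m} {k : ℕ}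
    (hk : (f ^ k) (u j) ∈ X) {v : V} (hv : (f ^ expnt f (u j)) v = 0) : (f ^ k) v ∈ X := by
  rw [← IsGenTuple.lift_single_pow_apply (hf := hf) (hU := hU) hv]
  exact hX _ (IsGenTuple.lift_apply_comm (pow_expnt_single_apply hv)) _ hk

end Hyperinvariant

section SumCycPow

variable {m : ℕ} {u : Fin m → V} {r : Fin m → ℕ}

def IsAdmissible (f : V →ₗ[K] V) (u : Fin m → V) (r : Fin m → ℕ) : Prop :=
  (∀ i, r i ≤ expnt f (u i)) ∧ Monotone r ∧ Monotone fun i => expnt f (u i) - r i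

theorem IsAdmissible.le_add (hr : IsAdmissible f u r) (i j : Fin m) :
    r j ≤ r i + (expnt f (u j) - expnt f (u i)) := by
  obtain ⟨hle, hmono, hmono'⟩ := hr
  rcases le_total j i with h | h
  · have := hmono h
    omega
  · have hdiff : expnt f (u i) - r i ≤ expnt f (u j) - r j := hmono' h
    have := hle i
    have := hle j
    omega

theorem IsAdmissible.eq_of_expnt_eq (hr : IsAdmissible f u r) {i j : Fin m}
    (h : expnt f (u j) = expnt f (u i)) : r j = r i := by
  have := hr.le_add i j
  have := hr.le_add j i
  omega

def sumCycPow (f : V →ₗ[K] V) (u : Fin m → V) (r : Fin m → ℕ) : Submodule K V :=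
  ⨆ i, cyc f ((f ^ r i) (u i))

theorem cyc_le_sumCycPow (i : Fin m) : cyc f ((f ^ r i) (u i)) ≤ sumCycPow f u r :=
  le_iSup (fun i => cyc f ((f ^ r i) (u i))) i

theorem apply_mem_sumCycPow {y : V} (hy : y ∈ sumCycPow f u r) : f y ∈ sumCycPow f u r := by
  refine (iSup_le fun i => ?_ : sumCycPow f u r ≤ (sumCycPow f u r).comap f) hy
  rw [← Submodule.map_le_iff_le_comap, map_cyc]
  exact (cyc_le (fun _ => apply_mem_cyc) (apply_mem_cyc (self_mem_cyc _))).trans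
    (cyc_le_sumCycPow i)

theorem sum_pow_apply_mem_sumCycPow : ∑ i, (f ^ r i) (u i) ∈ sumCycPow f u r :=
  Submodule.sum_mem _ fun i _ => cyc_le_sumCycPow i (self_mem_cyc _)

theorem pow_apply_mem_sumCycPow (hf : IsNilpotent f) (hU : IsGenTuple f u)
    (hr : IsAdmissible f u r) {i : Fin m} {v : V} (hv : (f ^ expnt f (u i)) v = 0) :
    (f ^ r i) v ∈ sumCycPow f u r := by
  rw [← hU.sum_proj_apply hf v, map_sum]
  refine Submodule.sum_mem _ fun j _ => cyc_le_sumCycPow j ?_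
  have hproj : hU.proj hf j v ∈ cyc f ((f ^ (expnt f (u j) - expnt f (u i))) (u j)) := by
    rw [← ker_pow_inf_cyc hf]
    refine Submodule.mem_inf.2 ⟨?_, hU.proj_apply_mem hf j v⟩
    rw [mem_ker, ← pow_apply_comm (hU.proj_apply_comm hf j), hv, map_zero]
  have := pow_apply_mem_cyc_pow (k := r i) hproj
  rw [pow_apply_pow] at this
  exact cyc_pow_le_cyc_pow (hr.le_add i j) _ this

theorem hyperinv_sumCycPow (hf : IsNilpotent f) (hU : IsGenTuple f u)
    (hr : IsAdmissible f u r) : Hyperinv f (sumCycPow f u r) := by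
  intro g hg
  suffices h : sumCycPow f u r ≤ (sumCycPow f u r).comap g from fun x hx => h hx
  refine iSup_le fun i => cyc_le (fun y hy => ?_) ?_
  · rw [Submodule.mem_comap, hg]
    exact apply_mem_sumCycPow hy
  · rw [Submodule.mem_comap, pow_apply_comm hg]
    refine pow_apply_mem_sumCycPow hf hU hr ?_
    rw [← pow_apply_comm hg, pow_expnt_apply hf, map_zero]

theorem charHull_eq_sumCycPow [FiniteDimensional K V] (hf : IsNilpotent f) (hU : IsGenTuple f u)
    (hrep : ∀ i, 1 < ulm f (expnt f (u i))) (hr : IsAdmissible f u r) :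
    charHull f {∑ i, (f ^ r i) (u i)} = sumCycPow f u r := by
  have hhyp := hyperinv_sumCycPow hf hU hr
  refine le_antisymm (Submodule.span_le.2 ?_) (iSup_le fun i => Submodule.span_le.2 ?_)
  · rintro - ⟨b, hb, k, α, hα, rfl⟩
    rw [Set.mem_singleton_iff] at hb
    subst hb
    exact hhyp.pow_apply_mem k (hhyp α.toLinearMap hα _ sum_pow_apply_mem_sumCycPow)
  · obtain ⟨j, hji, ht⟩ := hU.exists_ne_expnt_eq hf (hrep i)
    obtain ⟨α, hα, hαapply⟩ := hU.exists_commutes_apply_eq_add hf hji.symm ht.ge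
    have hw := pow_expnt_single_apply (u := u) ((expnt_le_iff hf).1 ht.ge)
    have hαsum : α (∑ l, (f ^ r l) (u l)) - ∑ l, (f ^ r l) (u l) = (f ^ r i) (u i) := by
      rw [hαapply, add_sub_cancel_left, map_sum, Fintype.sum_eq_single j fun l hl => by
        rw [IsGenTuple.lift_pow_apply hw, Pi.single_eq_of_ne hl, map_zero],
        IsGenTuple.lift_pow_apply hw, Pi.single_eq_same, hr.eq_of_expnt_eq ht]
    rintro - ⟨k, rfl⟩
    dsimp only
    rw [← hαsum, map_sub]
    exact sub_mem (Submodule.subset_span ⟨_, rfl, k, α, hα, rfl⟩)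
      (Submodule.subset_span ⟨_, rfl, k, LinearEquiv.refl K V, fun _ => rfl, rfl⟩)

end SumCycPow

section MinPow

variable {m : ℕ} {u : Fin m → V} {X : Submodule K V}

noncomputable def minPow (f : V →ₗ[K] V) (u : Fin m → V) (X : Submodule K V) (i : Fin m) : ℕ :=
  sInf {k | (f ^ k) (u i) ∈ X}

theorem minPow_le {i : Fin m} {k : ℕ} (h : (f ^ k) (u i) ∈ X) : minPow f u X i ≤ k :=
  Nat.sInf_le h

theorem minPow_le_expnt (hf : IsNilpotent f) (i : Fin m) : minPow f u X i ≤ expnt f (u i) :=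
  minPow_le (by rw [pow_expnt_apply hf]; exact zero_mem X)

theorem pow_minPow_apply_mem (hf : IsNilpotent f) (i : Fin m) :
    (f ^ minPow f u X i) (u i) ∈ X :=
  Nat.sInf_mem (s := {k | (f ^ k) (u i) ∈ X}) ⟨expnt f (u i), by
    rw [Set.mem_ofPred_eq, pow_expnt_apply hf]
    exact zero_mem X⟩

theorem Hyperinv.isAdmissible_minPow (hf : IsNilpotent f) (hU : IsGenTuple f u)
    (hX : Hyperinv f X) : IsAdmissible f u (minPow f u X) := by
  refine ⟨minPow_le_expnt hf, fun i j hij => minPow_le ?_, fun i j hij => ?_⟩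
  · exact hX.pow_apply_mem_of_pow_apply_mem hf hU (pow_minPow_apply_mem hf j)
      ((expnt_le_iff hf).1 (hU.2 hij))
  · have ht : expnt f (u i) ≤ expnt f (u j) := hU.2 hij
    have hshift : minPow f u X j ≤ minPow f u X i + (expnt f (u j) - expnt f (u i)) := by
      refine minPow_le ?_
      rw [← pow_apply_pow]
      refine hX.pow_apply_mem_of_pow_apply_mem hf hU (pow_minPow_apply_mem hf i) ?_
      rw [pow_apply_pow]
      exact (expnt_le_iff hf).1 (by omega)
    have := minPow_le_expnt (u := u) (X := X) hf i
    have := minPow_le_expnt (u := u) (X := X) hf j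
    simp only
    omega

theorem Hyperinv.eq_sumCycPow_minPow (hf : IsNilpotent f) (hU : IsGenTuple f u)
    (hX : Hyperinv f X) : X = sumCycPow f u (minPow f u X) := by
  refine le_antisymm (fun x hx => ?_)
    (iSup_le fun i => cyc_le (fun _ => hX.apply_mem) (pow_minPow_apply_mem hf i))
  rw [← hU.sum_proj_apply hf x]
  refine Submodule.sum_mem _ fun i _ => cyc_le_sumCycPow i ?_
  have hyX : hU.proj hf i x ∈ X := hX _ (hU.proj_apply_comm hf i) x hx
  have hcyc := cyc_eq_cyc_pow_of_mem hf (hU.proj_apply_mem hf i x)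
  set y := hU.proj hf i x
  have hgen : (f ^ (expnt f (u i) - expnt f y)) (u i) ∈ cyc f y := hcyc ▸ self_mem_cyc _
  have hmin := minPow_le (cyc_le (fun _ => hX.apply_mem) hyX hgen)
  exact cyc_pow_le_cyc_pow hmin _ (hcyc ▸ self_mem_cyc y)

end MinPow

end

theorem stmt17 {K V : Type*} [Field K] [AddCommGroup V] [Module K V]
    [FiniteDimensional K V] (f : V →ₗ[K] V) (hf : IsNilpotent f)
    {m : ℕ} (u : Fin m → V) (hU : IsGenTuple f u)
    (hrep : ∀ i, 1 < ulm f (expnt f (u i)))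
    (X : Submodule K V) :
    Hyperinv f X ↔
      ∃ r : Fin m → ℕ, (∀ i, r i ≤ expnt f (u i)) ∧ Monotone r ∧
        Monotone (fun i => expnt f (u i) - r i) ∧
        X = charHull f {∑ i, (f ^ (r i)) (u i)} := by
  constructor
  · intro hX
    have hr := hX.isAdmissible_minPow hf hU
    exact ⟨_, hr.1, hr.2.1, hr.2.2,
      (hX.eq_sumCycPow_minPow hf hU).trans (charHull_eq_sumCycPow hf hU hrep hr).symm⟩
  · rintro ⟨r, hle, hmono, hmono', rfl⟩
    have hr : IsAdmissible f u r := ⟨hle, hmono, hmono'⟩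
    rw [charHull_eq_sumCycPow hf hU hrep hr]
    exact hyperinv_sumCycPow hf hU hr
end
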